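/- arXiv:2509.06522 — 5 statements merged into one kernel-verified Lean document; each statement's English description precedes it below -/
import Mathlib

section
/- Let n, t₁, t₂ be rational integers with n not a perfect square, and suppose t₁t₂ + n is a perfect square in ℤ. Then for any prime q dividing t₁t₂, q^{f_q} divides t₁t₂, where f_q is the residue (inertia) degree of q in the quadratic extension ℚ(√n)/ℚ. In particular, if q is inert in ℚ(√n), then q² divides t₁t₂. -/
/-!
Let `r² = t₁t₂ + n`. In `𝓞 K` we have `t₁t₂ = r² - n = (r - √n)(r + √n)`, and both
factors have norm `r² - n`, because `K ≅ ℚ[ω]/(ω² - n)` with `n` a non-square. A prime `Q`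
above `q` contains `t₁t₂`, hence one of the factors, so its absolute norm `q ^ f_q` divides
the norm `t₁t₂` of that factor. If `q` is inert, `Q = (q)` has norm `q²`.
-/

open NumberField Module

namespace QuadraticAlgebra

variable {F L : Type*} [Field F] [Field L] [Algebra F L] {d : F} [Fact (∀ r, r ^ 2 ≠ d + 0 * r)]

noncomputable def algEquivOfFinrankEqTwo (hL : finrank F L = 2) (s : L)
    (hs : s * s = d • 1 + (0 : F) • s) : QuadraticAlgebra F d 0 ≃ₐ[F] L :=
  AlgEquiv.ofBijective (lift ⟨s, hs⟩) <| by
    have hinj : Function.Injective (lift ⟨s, hs⟩) := (lift ⟨s, hs⟩).toRingHom.injective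
    have : FiniteDimensional F L := .of_finrank_eq_succ hL
    exact ⟨hinj, (LinearMap.injective_iff_surjective_of_finrank_eq_finrank
      (by rw [finrank_eq_two, hL]) (f := (lift ⟨s, hs⟩).toLinearMap)).mp hinj⟩

theorem algebraNorm_eq_norm (z : QuadraticAlgebra F d 0) : Algebra.norm F z = norm z := by
  rw [Algebra.norm_apply, ← det_toLinearMap_eq_norm]
  rfl

theorem algebraNorm_algebraMap_sub_of_finrank_eq_two (hL : finrank F L = 2) {s : L}
    (hs : s ^ 2 = algebraMap F L d) (r : F) :
    Algebra.norm F (algebraMap F L r - s) = r ^ 2 - d := by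
  have hs' : s * s = d • 1 + (0 : F) • s := by simp [← sq, hs, Algebra.algebraMap_eq_smul_one]
  have : algebraMap F L r - s = algEquivOfFinrankEqTwo hL s hs' ⟨r, -1⟩ := by
    change _ = lift ⟨s, hs'⟩ ⟨r, -1⟩
    simp [Algebra.smul_def, sub_eq_add_neg]
  rw [this, Algebra.norm_eq_of_algEquiv, algebraNorm_eq_norm, norm_def]
  ring

end QuadraticAlgebra

section QuadraticField

variable {K : Type*} [Field K] [NumberField K] {n : ℤ}

theorem algebraNorm_intCast_sub_of_sq_eq (hK : finrank ℚ K = 2) (hn : ¬ IsSquare n) {s : K}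
    (hs : s ^ 2 = n) (r : ℤ) : Algebra.norm ℚ ((r : K) - s) = r ^ 2 - n := by
  have : Fact (∀ c : ℚ, c ^ 2 ≠ n + 0 * c) :=
    ⟨fun c hc ↦ hn <| Rat.isSquare_intCast_iff.mp ⟨c, by linear_combination -hc⟩⟩
  simpa using QuadraticAlgebra.algebraNorm_algebraMap_sub_of_finrank_eq_two hK
    (d := (n : ℚ)) (by simpa using hs) (r : ℚ)

theorem RingOfIntegers.algebraNorm_intCast_sub_of_sq_eq (hK : finrank ℚ K = 2)
    (hn : ¬ IsSquare n) {s : 𝓞 K} (hs : s ^ 2 = n) (r : ℤ) :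
    Algebra.norm ℤ ((r : 𝓞 K) - s) = r ^ 2 - n := by
  have hsK : (s : K) ^ 2 = n := by simpa using congrArg (algebraMap (𝓞 K) K) hs
  have h := Algebra.coe_norm_int ((r : 𝓞 K) - s)
  simp only [map_sub, map_intCast] at h
  rw [_root_.algebraNorm_intCast_sub_of_sq_eq hK hn hsK r] at h
  exact_mod_cast h

theorem absNorm_dvd_sq_sub_of_mem (hK : finrank ℚ K = 2) (hn : ¬ IsSquare n) {s : K}
    (hs : s ^ 2 = n) {r : ℤ} {Q : Ideal (𝓞 K)} [Q.IsPrime] (hQ : ((r ^ 2 - n : ℤ) : 𝓞 K) ∈ Q) :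
    (Ideal.absNorm Q : ℤ) ∣ r ^ 2 - n := by
  let s' : 𝓞 K := ⟨s, .of_pow two_pos (hs ▸ isIntegral_algebraMap (x := n))⟩
  have hs' : s' ^ 2 = n := RingOfIntegers.coe_injective (by rw [map_pow, map_intCast]; exact hs)
  have hfactor : ((r ^ 2 - n : ℤ) : 𝓞 K) = (r - s') * (r - -s') := by
    push_cast
    linear_combination hs'
  rw [hfactor] at hQ
  rcases Ideal.IsPrime.mem_or_mem ‹_› hQ with h | h
  · exact RingOfIntegers.algebraNorm_intCast_sub_of_sq_eq hK hn hs' r ▸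
      Ideal.absNorm_dvd_norm_of_mem h
  · exact RingOfIntegers.algebraNorm_intCast_sub_of_sq_eq hK hn (by rwa [neg_sq]) r ▸
      Ideal.absNorm_dvd_norm_of_mem h

end QuadraticField

/-- If `n` is not a perfect square and `t₁t₂ + n` is a perfect square in `ℤ`,
then for any prime `q` dividing `t₁t₂` and any prime ideal `Q` of the ring of integers of
`ℚ(√n)` lying above `q`, we have `q ^ f_q ∣ t₁t₂` where `f_q` is the residue (inertia) degree
of `q`.  In particular, if `q` is inert in `ℚ(√n)` then `q² ∣ t₁t₂`. -/
theorem prime_power_divides_of_diophantine_pair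
    (n t₁ t₂ : ℤ) (hn : ¬ IsSquare n) (hsq : ∃ r : ℤ, t₁ * t₂ + n = r ^ 2)
    (K : Type*) [Field K] [NumberField K] (hK : finrank ℚ K = 2)
    (s : K) (hs : s ^ 2 = (n : K))
    (q : ℕ) (hq : q.Prime) (hdvd : (q : ℤ) ∣ t₁ * t₂) :
    (∀ Q : Ideal (𝓞 K), Q.IsPrime → Q ≠ ⊥ →
        Q.comap (algebraMap ℤ (𝓞 K)) = Ideal.span {(q : ℤ)} →
        (q : ℤ) ^ Ideal.inertiaDeg' (Ideal.span {(q : ℤ)}) Q ∣ t₁ * t₂) ∧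
      (Prime (Ideal.span {(q : 𝓞 K)}) → (q : ℤ) ^ 2 ∣ t₁ * t₂) := by
  obtain ⟨r, hr⟩ := hsq
  rw [eq_sub_of_add_eq hr] at hdvd ⊢
  have hmem_span : ((r ^ 2 - n : ℤ) : 𝓞 K) ∈ Ideal.span {(q : 𝓞 K)} :=
    Ideal.mem_span_singleton.mpr (by exact_mod_cast Int.cast_dvd_cast _ _ hdvd)
  refine ⟨fun Q _ _ hQq ↦ ?_, fun hprime ↦ ?_⟩
  · have : Q.LiesOver (Ideal.span {(q : ℤ)}) := ⟨hQq.symm⟩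
    have hqQ : (q : 𝓞 K) ∈ Q := by
      have := hQq ▸ Ideal.mem_span_singleton_self (q : ℤ)
      rw [Ideal.mem_comap] at this
      simpa using this
    rw [← Nat.cast_pow, ← Ideal.absNorm_eq_pow_inertiaDeg' Q hq]
    exact absNorm_dvd_sq_sub_of_mem hK hn hs
      ((Ideal.span_singleton_le_iff_mem Q).mpr hqQ hmem_span)
  · have : (Ideal.span {(q : 𝓞 K)}).IsPrime := Ideal.isPrime_of_prime hprime
    have h := absNorm_dvd_sq_sub_of_mem hK hn hs hmem_span
    rwa [Ideal.absNorm_span_singleton, ← map_natCast (algebraMap ℤ (𝓞 K)),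
      Algebra.norm_algebraMap, RingOfIntegers.rank, hK, Int.natAbs_pow, Int.natAbs_natCast,
      Nat.cast_pow] at h
end

section
/- Let n be a nonzero integer that is not a perfect square and let {t₁, …, t_m} be a Diophantine m-tuple with the property D(n). Then there exists a positive integer κ dividing each tᵢ such that for every i the quotient tᵢ/κ is the norm of a nonzero integral ideal of ℚ(√n); that is, every Diophantine m-tuple with the property D(n) is a norm tuple or a constant times a norm tuple. -/
/-!
For `r : ℤ`, the algebraic integer `r + √n` has norm `r² - n`, so every product `tᵢtⱼ` of two
distinct entries of a `D(n)`-tuple is the norm of a nonzero ideal. In a quadratic field the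
norm of a prime ideal is `p` or `p²`, so a positive integer is an ideal norm exactly when it has
even valuation at every rational prime `p` that is not itself a norm. Hence all the `tᵢ` have
the same valuation parities at these primes, and dividing by the product `κ` of those primes
where the parity is odd leaves ideal norms.
-/

open NumberField Module

theorem Algebra.norm_algebraMap_add_of_sq_eq {F K : Type*} [Field F] [Field K] [Algebra F K]
    (hK : finrank F K = 2) {s : K} {c : F} (hs : s ^ 2 = algebraMap F K c)
    (hsF : s ∉ Set.range (algebraMap F K)) (r : F) :
    Algebra.norm F (algebraMap F K r + s) = r ^ 2 - c := by
  have hli : LinearIndependent F ![1, s] := by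
    rw [LinearIndependent.pair_iff]
    intro a b hab
    simp only [Algebra.smul_def, mul_one] at hab
    have hb : b = 0 := by
      by_contra hb
      refine hsF ⟨-a / b, ?_⟩
      rw [map_div₀, map_neg, div_eq_iff (by simpa using hb)]
      linear_combination -hab
    simp_all
  let b := basisOfLinearIndependentOfCardEqFinrank hli (by simp [hK])
  have hb : ⇑b = ![1, s] := coe_basisOfLinearIndependentOfCardEqFinrank hli _
  have hb0 : b.repr 1 = Finsupp.single 0 1 := by simpa [hb] using b.repr_self 0
  have hb1 : b.repr s = Finsupp.single 1 1 := by simpa [hb] using b.repr_self 1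
  have hmul : (r • 1 + s) * s = c • 1 + r • s := by
    simp only [Algebra.smul_def]
    linear_combination hs
  rw [Algebra.norm_eq_matrix_det b, Matrix.det_fin_two]
  simp only [Algebra.algebraMap_eq_smul_one r, Algebra.leftMulMatrix_eq_repr_mul, hb,
    Matrix.cons_val_zero, Matrix.cons_val_one, mul_one, hmul]
  simp [hb0, hb1, sq]

theorem Nat.exists_dvd_forall_even_factorization_div {ι : Type*} (T : Set ℕ) (t : ι → ℕ)
    (ht : ∀ i, t i ≠ 0)
    (h : ∀ i j, ∀ p ∈ T, Even ((t i).factorization p + (t j).factorization p)) :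
    ∃ κ, 0 < κ ∧ ∀ i, κ ∣ t i ∧ ∀ p ∈ T, Even ((t i / κ).factorization p) := by
  classical
  rcases isEmpty_or_nonempty ι with hι | ⟨⟨i₀⟩⟩
  · exact ⟨1, one_pos, isEmptyElim⟩
  let f : ℕ →₀ ℕ := ((t i₀).factorization.filter (· ∈ T)).mapRange (· % 2) (Nat.zero_mod 2)
  have hf : ∀ p, f p = if p ∈ T then (t i₀).factorization p % 2 else 0 := by
    intro p
    simp only [f, Finsupp.mapRange_apply, Finsupp.filter_apply]
    split_ifs <;> rfl
  have hf_prime : ∀ p ∈ f.support, p.Prime := by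
    intro p hp
    by_contra hnp
    rw [Finsupp.mem_support_iff, hf, Nat.factorization_eq_zero_of_not_prime _ hnp] at hp
    simp at hp
  have hκ : (f.prod (· ^ ·)).factorization = f := Nat.prod_pow_factorization_eq_self hf_prime
  have hκ0 : 0 < f.prod (· ^ ·) := Finset.prod_pos fun p hp => pow_pos (hf_prime p hp).pos _
  have hle : ∀ i, f ≤ (t i).factorization := by
    intro i p
    rw [hf]
    split_ifs with hp
    · have := h i₀ i p hp
      rw [Nat.even_iff] at this
      omega
    · exact Nat.zero_le _
  refine ⟨f.prod (· ^ ·), hκ0, fun i => ?_⟩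
  have hdvd := (Nat.factorization_le_iff_dvd hκ0.ne' (ht i)).1 (by rw [hκ]; exact hle i)
  refine ⟨hdvd, fun p hp => ?_⟩
  have := h i₀ i p hp
  rw [Nat.factorization_div hdvd, Finsupp.tsub_apply, hκ, hf, if_pos hp]
  rw [Nat.even_iff] at this ⊢
  omega

namespace NumberField

noncomputable def idealNorms (K : Type*) [Field K] [NumberField K] : Submonoid ℕ :=
  (nonZeroDivisors (Ideal (𝓞 K))).map Ideal.absNorm

variable {K : Type*} [Field K] [NumberField K]

theorem mem_idealNorms {a : ℕ} :
    a ∈ idealNorms K ↔ ∃ 𝔞 : Ideal (𝓞 K), 𝔞 ≠ ⊥ ∧ Ideal.absNorm 𝔞 = a := by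
  simp [idealNorms, mem_nonZeroDivisors_iff_ne_zero]

theorem natAbs_norm_mem_idealNorms {x : 𝓞 K} (hx : x ≠ 0) :
    (Algebra.norm ℤ x).natAbs ∈ idealNorms K :=
  mem_idealNorms.2 ⟨Ideal.span {x}, by simpa using hx, Ideal.absNorm_span_singleton x⟩

theorem pow_finrank_mem_idealNorms {a : ℕ} (ha : a ≠ 0) : a ^ finrank ℚ K ∈ idealNorms K :=
  mem_idealNorms.2 ⟨Ideal.span {(a : 𝓞 K)}, by simpa using ha,
    by rw [Ideal.absNorm_span_natCast, RingOfIntegers.rank]⟩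

theorem exists_absNorm_eq_prime_pow_le_finrank (P : Ideal (𝓞 K)) [P.IsMaximal] :
    ∃ p f, p.Prime ∧ 0 < f ∧ f ≤ finrank ℚ K ∧ Ideal.absNorm P = p ^ f := by
  obtain ⟨p, f, hf, hpP, hp, hP⟩ := Ideal.exists_prime_and_absNorm_eq_pow P
  refine ⟨p, f, hp, hf, ?_, hP⟩
  have : p ^ f ∣ p ^ finrank ℚ K := by
    rw [← hP, ← RingOfIntegers.rank, ← Ideal.absNorm_span_natCast]
    exact Ideal.absNorm_dvd_absNorm_of_le ((Ideal.span_singleton_le_iff_mem _).2 hpP)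
  exact (Nat.pow_dvd_pow_iff_le_right hp.one_lt).1 this

section Quadratic

variable (hK : finrank ℚ K = 2)
include hK

theorem even_factorization_absNorm_of_not_mem_idealNorms (P : Ideal (𝓞 K)) [P.IsMaximal]
    {p : ℕ} (hp : p ∉ idealNorms K) : Even ((Ideal.absNorm P).factorization p) := by
  obtain ⟨q, f, hq, hf, hfK, hP⟩ := exists_absNorm_eq_prime_pow_le_finrank P
  rw [hP, hq.factorization_pow, Finsupp.single_apply]
  split_ifs with hqp
  · subst hqp
    have hf1 : f ≠ 1 := by
      rintro rfl
      exact hp <| mem_idealNorms.2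
        ⟨P, Ideal.IsMaximal.ne_bot_of_isIntegral_int P, by rw [hP, pow_one]⟩
    obtain rfl : f = 2 := by omega
    exact even_two
  · exact Even.zero

theorem even_factorization_of_mem_idealNorms {a : ℕ} (ha : a ∈ idealNorms K) {p : ℕ}
    (hp : p ∉ idealNorms K) : Even (a.factorization p) := by
  obtain ⟨I, hI, rfl⟩ := mem_idealNorms.1 ha
  clear ha
  rw [← Ideal.zero_eq_bot] at hI
  induction I using UniqueFactorizationMonoid.induction_on_prime with
  | h₁ => exact absurd rfl hI
  | h₂ I hunit => simp [Ideal.isUnit_iff.1 hunit]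
  | h₃ I P hI' hP ih =>
    have : P.IsMaximal := (Ideal.isPrime_of_prime hP).isMaximal hP.ne_zero
    rw [map_mul, Nat.factorization_mul (by simpa [Ideal.absNorm_eq_zero_iff] using hP.ne_zero)
      (by simpa [Ideal.absNorm_eq_zero_iff] using hI'), Finsupp.add_apply]
    exact (even_factorization_absNorm_of_not_mem_idealNorms hK P hp).add (ih hI')

theorem mem_idealNorms_iff_forall_even_factorization {a : ℕ} (ha : a ≠ 0) :
    a ∈ idealNorms K ↔ ∀ p, p.Prime → p ∉ idealNorms K → Even (a.factorization p) := by
  refine ⟨fun h p _ hp => even_factorization_of_mem_idealNorms hK h hp, fun h => ?_⟩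
  rw [← Nat.prod_factorization_pow_eq_self ha]
  refine SubmonoidClass.finsuppProd_mem _ _ _ fun p hp0 => ?_
  have hp : p.Prime := Nat.prime_of_mem_primeFactors (Finsupp.mem_support_iff.2 hp0)
  by_cases hpK : p ∈ idealNorms K
  · exact pow_mem hpK _
  · obtain ⟨k, hk⟩ := h p hp hpK
    rw [hk, ← two_mul, pow_mul', ← hK]
    exact pow_finrank_mem_idealNorms (pow_ne_zero _ hp.ne_zero)

theorem natAbs_sq_sub_mem_idealNorms {n : ℤ} (hn : ¬ IsSquare n) {s : K} (hs : s ^ 2 = n)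
    (r : ℤ) : (r ^ 2 - n).natAbs ∈ idealNorms K := by
  have hsQ : s ∉ Set.range (algebraMap ℚ K) := by
    rintro ⟨q, rfl⟩
    refine hn (Rat.isSquare_intCast_iff.1 ⟨q, (algebraMap ℚ K).injective ?_⟩)
    simpa [sq] using hs.symm
  have hsℤ : IsIntegral ℤ s := IsIntegral.of_pow two_pos (hs ▸ isIntegral_algebraMap)
  let x : 𝓞 K := r + ⟨s, hsℤ⟩
  have hx : Algebra.norm ℤ x = r ^ 2 - n := by
    apply Int.cast_injective (α := ℚ)
    rw [Algebra.coe_norm_int, show (x : K) = r + s from rfl]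
    simpa using Algebra.norm_algebraMap_add_of_sq_eq hK (c := n) (by simpa using hs) hsQ r
  have hx0 : x ≠ 0 := by
    intro h
    rw [h, Algebra.norm_zero] at hx
    exact hn ⟨r, by linarith⟩
  simpa [hx] using natAbs_norm_mem_idealNorms hx0

end Quadratic

end NumberField

theorem diophantine_tuple_is_const_times_norm_tuple_general
    (n : ℤ) (hnsq : ¬ IsSquare n)
    (K : Type*) [Field K] [NumberField K] (hK : finrank ℚ K = 2)
    (s : K) (hs : s ^ 2 = (n : K))
    (m : ℕ) (t : Fin m → ℕ) (hpos : ∀ i, 0 < t i)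
    (hD : ∀ i j, i ≠ j → ∃ r : ℤ, (t i : ℤ) * t j + n = r ^ 2) :
    ∃ κ : ℕ, 0 < κ ∧ ∀ i, ∃ 𝔞 : Ideal (𝓞 K), 𝔞 ≠ ⊥ ∧ t i = κ * Ideal.absNorm 𝔞 := by
  have ht : ∀ i, t i ≠ 0 := fun i => (hpos i).ne'
  have hprod : ∀ i j, i ≠ j → t i * t j ∈ idealNorms K := by
    intro i j hij
    obtain ⟨r, hr⟩ := hD i j hij
    have : t i * t j = (r ^ 2 - n).natAbs := by omega
    exact this ▸ natAbs_sq_sub_mem_idealNorms hK hnsq hs r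
  have hparity : ∀ i j, ∀ p ∈ {p | p ∉ idealNorms K},
      Even ((t i).factorization p + (t j).factorization p) := by
    intro i j p hp
    rcases eq_or_ne i j with rfl | hij
    · exact Even.add_self _
    · rw [← Finsupp.add_apply, ← Nat.factorization_mul (ht i) (ht j)]
      exact even_factorization_of_mem_idealNorms hK (hprod i j hij) hp
  obtain ⟨κ, hκ, hdvd⟩ := Nat.exists_dvd_forall_even_factorization_div _ t ht hparity
  refine ⟨κ, hκ, fun i => ?_⟩
  have hquot : t i / κ ∈ idealNorms K :=
    (mem_idealNorms_iff_forall_even_factorization hK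
      (Nat.div_ne_zero_iff_of_dvd (hdvd i).1 |>.2 ⟨ht i, hκ.ne'⟩)).2
      fun p _ hp => (hdvd i).2 p hp
  obtain ⟨𝔞, h𝔞, hN⟩ := mem_idealNorms.1 hquot
  exact ⟨𝔞, h𝔞, by rw [hN, Nat.mul_div_cancel' (hdvd i).1]⟩

/-- Every Diophantine `m`-tuple with the property `D(n)` is a norm tuple or
a constant times a norm tuple: there is a positive integer `κ` dividing each `tᵢ` such that
each `tᵢ/κ` is the norm of a nonzero integral ideal of `ℚ(√n)`. -/
theorem diophantine_tuple_is_const_times_norm_tuple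
    (n : ℤ) (hn : n ≠ 0) (hnsq : ¬ IsSquare n)
    (K : Type*) [Field K] [NumberField K] (hK : finrank ℚ K = 2)
    (s : K) (hs : s ^ 2 = (n : K))
    (m : ℕ) (t : Fin m → ℕ) (hinj : Function.Injective t) (hpos : ∀ i, 0 < t i)
    (hD : ∀ i j, i ≠ j → ∃ r : ℤ, (t i : ℤ) * t j + n = r ^ 2) :
    ∃ κ : ℕ, 0 < κ ∧ ∀ i, ∃ 𝔞 : Ideal (𝓞 K), 𝔞 ≠ ⊥ ∧ t i = κ * Ideal.absNorm 𝔞 :=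
  diophantine_tuple_is_const_times_norm_tuple_general n hnsq K hK s hs m t hpos hD
end

section
/- Let n be a nonzero integer that is not a perfect square and let {a₁, …, a_m} be a Diophantine m-tuple with the property D(n) such that gcd(a₁, …, a_m) = 1. Then {a₁, …, a_m} is a norm tuple: each aᵢ is the norm of a nonzero integral ideal of ℚ(√n). -/
/-!
Call `t` a norm if `t = 𝒩 𝔞` for an ideal `𝔞` of `𝓞 K`; norms form a submonoid of `ℕ` that
contains every square `q ^ 2 = 𝒩 (q)`. Hence `aᵢ` is a norm as soon as every prime `p` dividing
it to an odd power is one. If such a `p` were not a norm, then, since a prime ideal has norm `q`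
or `q ^ 2` for a rational prime `q`, every norm would have even `p`-adic valuation. But the gcd
condition gives `j` with `p ∤ aⱼ`, and `aᵢ aⱼ = r ^ 2 - n = 𝒩 (r + √n)` has odd `p`-adic valuation.
-/
open NumberField Module Ideal

section AbsNormRange

variable {S : Type*} [CommRing S] [IsDedekindDomain S] [Module.Free ℤ S] [Module.Finite ℤ S]

theorem absNorm_dvd_absNorm_under_pow (I : Ideal S) :
    absNorm I ∣ absNorm (under ℤ I) ^ finrank ℤ S := by
  rw [← absNorm_span_natCast]
  exact absNorm_dvd_absNorm_of_le ((span_singleton_le_iff_mem I).mpr (Int.absNorm_under_mem I))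

theorem even_factorization_absNorm_of_isPrime (hrank : finrank ℤ S = 2) {p : ℕ}
    (hp : p ∉ MonoidHom.mrange (absNorm : Ideal S →*₀ ℕ)) (P : Ideal S) [P.IsPrime] :
    Even ((absNorm P).factorization p) := by
  rcases eq_or_ne P ⊥ with rfl | hP
  · simp
  have : NeZero P := ⟨hP⟩
  -- `P` contains the rational prime `q` below it, so `𝒩 P ∣ 𝒩 (q) = q ^ 2`.
  have hq : (absNorm (under ℤ P)).Prime := Nat.absNorm_under_prime P
  obtain ⟨k, hk, hPq⟩ := (Nat.dvd_prime_pow hq).mp (hrank ▸ absNorm_dvd_absNorm_under_pow P)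
  rw [hPq, Nat.factorization_pow]
  interval_cases k
  · simp
  · have hqp : absNorm (under ℤ P) ≠ p := fun h => hp ⟨P, by rw [hPq, h, pow_one]⟩
    simp [hq.factorization, hqp]
  · simp

theorem even_factorization_absNorm (hrank : finrank ℤ S = 2) {p : ℕ}
    (hp : p ∉ MonoidHom.mrange (absNorm : Ideal S →*₀ ℕ)) (I : Ideal S) :
    Even ((absNorm I).factorization p) := by
  induction I using UniqueFactorizationMonoid.induction_on_prime with
  | h₁ => simp
  | h₂ I hI => simp [isUnit_iff.mp hI]
  | h₃ I P hI hP ih =>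
    have := (prime_iff_isPrime hP.ne_zero).mp hP
    rw [map_mul, Nat.factorization_mul (absNorm_eq_zero_iff.not.mpr hP.ne_zero)
      (absNorm_eq_zero_iff.not.mpr hI)]
    exact (even_factorization_absNorm_of_isPrime hrank hp P).add ih

theorem sq_mem_mrange_absNorm (hrank : finrank ℤ S = 2) (q : ℕ) :
    q ^ 2 ∈ MonoidHom.mrange (absNorm : Ideal S →*₀ ℕ) :=
  ⟨span {(q : S)}, by rw [absNorm_span_natCast, hrank]⟩

theorem mem_mrange_absNorm_of_odd_factorization (hrank : finrank ℤ S = 2) {t : ℕ} (ht : t ≠ 0)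
    (h : ∀ q, Odd (t.factorization q) → q ∈ MonoidHom.mrange (absNorm : Ideal S →*₀ ℕ)) :
    t ∈ MonoidHom.mrange (absNorm : Ideal S →*₀ ℕ) := by
  rw [← Nat.prod_factorization_pow_eq_self ht]
  refine SubmonoidClass.finsuppProd_mem _ _ _ fun q _ => ?_
  rcases (t.factorization q).even_or_odd with ⟨k, hk⟩ | hodd
  · rw [hk, ← two_mul, pow_mul]
    exact pow_mem (sq_mem_mrange_absNorm hrank q) k
  · exact pow_mem (h q hodd) _

end AbsNormRange

theorem Algebra.norm_algebraMap_add_eq_sq_sub {F K : Type*} [Field F] [Field K] [Algebra F K]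
    (hK : finrank F K = 2) {s : K} (hs : s ∉ Set.range (algebraMap F K)) {d : F}
    (hsd : s ^ 2 = algebraMap F K d) (c : F) :
    Algebra.norm F (algebraMap F K c + s) = c ^ 2 - d := by
  have hli : LinearIndependent F ![(1 : K), s] := by
    refine (LinearIndependent.pair_iff' one_ne_zero).mpr fun q hq => hs ⟨q, ?_⟩
    rw [← hq, Algebra.smul_def, mul_one]
  let b := basisOfLinearIndependentOfCardEqFinrank hli (by simp [hK])
  have hb : ⇑b = ![1, s] := coe_basisOfLinearIndependentOfCardEqFinrank hli _
  have repr_eq (y : K) (u v : F) (hy : y = u • b 0 + v • b 1) (i : Fin 2) :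
      b.repr y i = ![u, v] i := by
    fin_cases i <;> simp [hy]
  have mul_b0 : (algebraMap F K c + s) * b 0 = c • b 0 + (1 : F) • b 1 := by
    simp [hb, Algebra.smul_def]
  have mul_b1 : (algebraMap F K c + s) * b 1 = d • b 0 + c • b 1 := by
    simp only [hb, Matrix.cons_val_zero, Matrix.cons_val_one, Matrix.cons_val_fin_one,
      Algebra.smul_def, ← hsd, mul_one]
    ring
  rw [Algebra.norm_eq_matrix_det b, Matrix.det_fin_two]
  simp only [Algebra.leftMulMatrix_eq_repr_mul, repr_eq _ _ _ mul_b0, repr_eq _ _ _ mul_b1]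
  simp only [Matrix.cons_val_zero, Matrix.cons_val_one, mul_one]
  ring

theorem absNorm_span_intCast_add_of_sq_eq {K : Type*} [Field K] [NumberField K]
    (hK : finrank ℚ K = 2) {n : ℤ} (hn : ¬ IsSquare n) {σ : 𝓞 K} (hσ : σ ^ 2 = n) (r : ℤ) :
    absNorm (span {(r : 𝓞 K) + σ}) = (r ^ 2 - n).natAbs := by
  have hσK : (σ : K) ^ 2 = algebraMap ℚ K n := by
    simpa using congrArg (algebraMap (𝓞 K) K) hσ
  have hσQ : (σ : K) ∉ Set.range (algebraMap ℚ K) := by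
    rintro ⟨q, hq⟩
    refine hn (Rat.isSquare_intCast_iff.mp ⟨q, (algebraMap ℚ K).injective ?_⟩)
    rw [map_mul, hq, ← sq, hσK]
  rw [absNorm_span_singleton]
  congr 1
  apply Int.cast_injective (α := ℚ)
  rw [Algebra.coe_norm_int]
  simpa using Algebra.norm_algebraMap_add_eq_sq_sub hK hσQ hσK r

theorem diophantine_tuple_coprime_is_norm_tuple_general
    (n : ℤ) (hnsq : ¬ IsSquare n)
    (K : Type*) [Field K] [NumberField K] (hK : finrank ℚ K = 2)
    (s : K) (hs : s ^ 2 = (n : K))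
    (m : ℕ) (a : Fin m → ℕ) (hpos : ∀ i, 0 < a i)
    (hD : ∀ i j, i ≠ j → ∃ r : ℤ, (a i : ℤ) * a j + n = r ^ 2)
    (hgcd : Finset.univ.gcd a = 1) :
    ∀ i, ∃ 𝔞 : Ideal (𝓞 K), 𝔞 ≠ ⊥ ∧ Ideal.absNorm 𝔞 = a i := by
  have hrank : finrank ℤ (𝓞 K) = 2 := (RingOfIntegers.rank K).trans hK
  let σ : 𝓞 K := ⟨s, .of_pow two_pos (hs ▸ isIntegral_algebraMap (x := n))⟩
  have hσ : σ ^ 2 = n := RingOfIntegers.ext (by push_cast; exact hs)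
  intro i
  suffices a i ∈ MonoidHom.mrange (absNorm : Ideal (𝓞 K) →*₀ ℕ) by
    obtain ⟨𝔞, h𝔞⟩ := this
    exact ⟨𝔞, by rintro rfl; exact (hpos i).ne (by simpa using h𝔞), h𝔞⟩
  refine mem_mrange_absNorm_of_odd_factorization hrank (hpos i).ne' fun p hodd => ?_
  by_contra hp
  have hpi : p ∣ a i := Nat.dvd_of_factorization_pos hodd.pos.ne'
  obtain ⟨j, hpj⟩ : ∃ j, ¬ p ∣ a j := by
    by_contra! h
    have hp1 : p = 1 := Nat.dvd_one.mp (hgcd ▸ Finset.dvd_gcd fun j _ => h j)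
    exact hodd.pos.ne' (hp1 ▸ Nat.factorization_one_right _)
  obtain ⟨r, hr⟩ := hD i j (by rintro rfl; exact hpj hpi)
  have heven := even_factorization_absNorm hrank hp (span {(r : 𝓞 K) + σ})
  rw [absNorm_span_intCast_add_of_sq_eq hK hnsq hσ r, ← hr, add_sub_cancel_right,
    ← Nat.cast_mul, Int.natAbs_natCast, Nat.factorization_mul (hpos i).ne' (hpos j).ne',
    Finsupp.add_apply, Nat.factorization_eq_zero_of_not_dvd hpj, add_zero] at heven
  exact Nat.not_even_iff_odd.mpr hodd heven

/-- A Diophantine `m`-tuple with the property `D(n)` whose elements have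
greatest common divisor `1` is a norm tuple: each `aᵢ` is the norm of a nonzero integral
ideal of `ℚ(√n)`. -/
theorem diophantine_tuple_coprime_is_norm_tuple
    (n : ℤ) (hn : n ≠ 0) (hnsq : ¬ IsSquare n)
    (K : Type*) [Field K] [NumberField K] (hK : finrank ℚ K = 2)
    (s : K) (hs : s ^ 2 = (n : K))
    (m : ℕ) (a : Fin m → ℕ) (hinj : Function.Injective a) (hpos : ∀ i, 0 < a i)
    (hD : ∀ i j, i ≠ j → ∃ r : ℤ, (a i : ℤ) * a j + n = r ^ 2)
    (hgcd : Finset.univ.gcd a = 1) :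
    ∀ i, ∃ 𝔞 : Ideal (𝓞 K), 𝔞 ≠ ⊥ ∧ Ideal.absNorm 𝔞 = a i :=
  diophantine_tuple_coprime_is_norm_tuple_general n hnsq K hK s hs m a hpos hD hgcd
end

section
/- Let n be a squarefree integer with n ≠ 1, and let a₁, a₂ be coprime positive integers such that a₁a₂ + n = x² for some integer x. Then in the ring of integers of ℚ(√n), the product of ideals ⟨a₁, x + √n⟩ · ⟨a₂, x + √n⟩ equals the principal ideal ⟨x + √n⟩. -/
/-! The product `⟨a₁, t⟩ · ⟨a₂, t⟩` with `t = x + √n` is generated by `a₁a₂, a₁t, a₂t, t²`. All four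
are multiples of `t`, because `a₁a₂ = x² - n = (x - √n) t`; conversely `t = u a₁ t + v a₂ t` for a
Bézout relation `u a₁ + v a₂ = 1`. -/

open NumberField Module

theorem Ideal.span_pair_mul_span_pair_eq_span_singleton {R : Type*} [CommRing R] {a b t : R}
    (hab : IsCoprime a b) (ht : t ∣ a * b) :
    Ideal.span {a, t} * Ideal.span {b, t} = Ideal.span {t} := by
  rw [Ideal.span_pair_mul_span_pair]
  apply le_antisymm
  · simp only [Ideal.span_le, Set.insert_subset_iff, Set.singleton_subset_iff, SetLike.mem_coe,
      Ideal.mem_span_singleton]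
    exact ⟨ht, dvd_mul_left t a, dvd_mul_right t b, dvd_mul_right t t⟩
  · obtain ⟨u, v, huv⟩ := hab
    have hat : a * t ∈ Ideal.span {a * b, a * t, t * b, t * t} := Ideal.subset_span (by simp)
    have htb : t * b ∈ Ideal.span {a * b, a * t, t * b, t * t} := Ideal.subset_span (by simp)
    rw [Ideal.span_singleton_le_iff_mem]
    convert Ideal.add_mem _ (Ideal.mul_mem_left _ u hat) (Ideal.mul_mem_left _ v htb) using 1
    linear_combination (-t) * huv

theorem prod_of_explicit_ideals_eq_principal_general
    (n : ℤ)
    (K : Type*) [Field K]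
    (σ : 𝓞 K) (hσ : σ ^ 2 = (n : 𝓞 K))
    (a₁ a₂ : ℕ) (hcop : Nat.Coprime a₁ a₂)
    (x : ℤ) (hx : (a₁ : ℤ) * a₂ + n = x ^ 2) :
    Ideal.span {(a₁ : 𝓞 K), (x : 𝓞 K) + σ} * Ideal.span {(a₂ : 𝓞 K), (x : 𝓞 K) + σ} =
      Ideal.span {(x : 𝓞 K) + σ} := by
  have hcop' : IsCoprime (a₁ : 𝓞 K) (a₂ : 𝓞 K) := by
    simpa using (Nat.isCoprime_iff_coprime.2 hcop).map (Int.castRingHom (𝓞 K))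
  have hnorm : (a₁ : 𝓞 K) * a₂ = ((x : 𝓞 K) - σ) * ((x : 𝓞 K) + σ) := by
    have hx' := congrArg (Int.cast : ℤ → 𝓞 K) hx
    push_cast at hx'
    linear_combination hx' + hσ
  exact Ideal.span_pair_mul_span_pair_eq_span_singleton hcop' ⟨_, hnorm.trans (mul_comm _ _)⟩

/-- Let `n` be a squarefree integer, `n ≠ 1`, and let `a₁, a₂` be coprime
positive integers with `a₁a₂ + n = x²` for some integer `x`.  Then in the ring of integers
of `ℚ(√n)` one has `⟨a₁, x + √n⟩ · ⟨a₂, x + √n⟩ = ⟨x + √n⟩`. -/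
theorem prod_of_explicit_ideals_eq_principal
    (n : ℤ) (hsf : Squarefree n) (hn : n ≠ 1)
    (K : Type*) [Field K] [NumberField K] (hK : finrank ℚ K = 2)
    (σ : 𝓞 K) (hσ : σ ^ 2 = (n : 𝓞 K))
    (a₁ a₂ : ℕ) (ha₁ : 0 < a₁) (ha₂ : 0 < a₂) (hcop : Nat.Coprime a₁ a₂)
    (x : ℤ) (hx : (a₁ : ℤ) * a₂ + n = x ^ 2) :
    Ideal.span {(a₁ : 𝓞 K), (x : 𝓞 K) + σ} * Ideal.span {(a₂ : 𝓞 K), (x : 𝓞 K) + σ} =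
      Ideal.span {(x : 𝓞 K) + σ} :=
  prod_of_explicit_ideals_eq_principal_general n K σ hσ a₁ a₂ hcop x hx
end

section
/- Let n be a squarefree integer with n ≠ 1, and let a₁, a₂ be coprime positive integers such that a₁a₂ + n = x² for some integer x. Then for i = 1, 2, the norm of the integral ideal ⟨aᵢ, x + √n⟩ of the ring of integers of ℚ(√n) divides aᵢ. -/
/-!
The ideal `⟨a, x + √n⟩` contains `a` and `x + √n`, of norms `a²` and `x² - n = a₁a₂`, so its
norm divides `gcd (a², a₁a₂) = a` by coprimality. Computing `N(x + √n) = x² - n` requires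
`√n ∉ ℚ`, which is what squarefreeness and `n ≠ 1` provide.
-/

open NumberField Module Polynomial IntermediateField

theorem minpoly_eq_of_notMem_range_of_natDegree_eq_two {F K : Type*} [Field F] [Ring K]
    [Nontrivial K] [Algebra F K] {α : K} {q : F[X]} (hq : q.Monic) (hdeg : q.natDegree = 2)
    (hroot : aeval α q = 0) (hα : α ∉ (algebraMap F K).range) :
    minpoly F α = q := by
  have hint : IsIntegral F α := ⟨q, hq, hroot⟩
  refine (eq_of_monic_of_dvd_of_natDegree_le (minpoly.monic hint) hq (minpoly.dvd F α hroot)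
    ?_).symm
  exact hdeg ▸ (minpoly.two_le_natDegree_iff hint).mpr hα

theorem Algebra.norm_eq_coeff_zero_minpoly_of_natDegree_eq_finrank {F K : Type*} [Field F]
    [Field K] [Algebra F K] [FiniteDimensional F K] {α : K}
    (h : (minpoly F α).natDegree = finrank F K) :
    Algebra.norm F α = (-1) ^ finrank F K * (minpoly F α).coeff 0 := by
  have hint : IsIntegral F α := .of_finite F α
  have hrank : finrank F⟮α⟯ K = 1 := by
    have htower := finrank_mul_finrank F F⟮α⟯ K
    rw [adjoin.finrank hint, h] at htower
    exact (Nat.mul_eq_left finrank_pos.ne').mp htower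
  rw [Algebra.norm_eq_norm_adjoin F α, hrank, pow_one]
  have hgen := Algebra.PowerBasis.norm_gen_eq_coeff_zero_minpoly
    (IntermediateField.adjoin.powerBasis hint)
  rwa [IntermediateField.adjoin.powerBasis_gen, minpoly_gen,
    IntermediateField.adjoin.powerBasis_dim, h] at hgen

theorem Int.not_isSquare_of_squarefree {n : ℤ} (hsf : Squarefree n) (hn : n ≠ 1) :
    ¬IsSquare n := by
  rintro ⟨m, rfl⟩
  rcases Int.isUnit_iff.mp (hsf m dvd_rfl) with rfl | rfl <;> simp at hn

theorem intCast_add_notMem_range_of_sq_eq {K : Type*} [Field K] [CharZero K] {n : ℤ}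
    (hn : ¬IsSquare n) {σ : K} (hσ : σ ^ 2 = n) (x : ℤ) :
    (x : K) + σ ∉ (algebraMap ℚ K).range := by
  rintro ⟨r, hr⟩
  refine hn (Rat.isSquare_intCast_iff.mp ⟨r - x, (algebraMap ℚ K).injective ?_⟩)
  rw [map_mul, map_sub, hr, map_intCast, map_intCast, ← hσ]
  ring

theorem RingOfIntegers.norm_intCast_add_of_sq_eq {K : Type*} [Field K] [NumberField K]
    (hK : finrank ℚ K = 2) {n : ℤ} (hn : ¬IsSquare n) {σ : 𝓞 K} (hσ : σ ^ 2 = n) (x : ℤ) :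
    Algebra.norm ℤ ((x : 𝓞 K) + σ) = x ^ 2 - n := by
  have hσK : (σ : K) ^ 2 = n := by simpa using congrArg ((↑) : 𝓞 K → K) hσ
  have hminpoly :
      minpoly ℚ ((x : K) + σ) = X ^ 2 - C (2 * x : ℚ) * X + C ((x : ℚ) ^ 2 - n) := by
    refine minpoly_eq_of_notMem_range_of_natDegree_eq_two (by monicity!) (by compute_degree!) ?_
      (intCast_add_notMem_range_of_sq_eq hn hσK x)
    simp only [map_add, map_sub, map_mul, aeval_C, aeval_X, map_pow, eq_ratCast]
    push_cast
    linear_combination hσK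
  have hnormℚ : Algebra.norm ℚ ((x : K) + σ) = (x : ℚ) ^ 2 - n := by
    rw [Algebra.norm_eq_coeff_zero_minpoly_of_natDegree_eq_finrank
      (by rw [hminpoly, hK]; compute_degree!), hminpoly, hK]
    simp only [coeff_add, coeff_sub, coeff_X_pow, coeff_C_mul, coeff_X_zero, coeff_C_zero]
    norm_num
  have hcoe : (((x : 𝓞 K) + σ : 𝓞 K) : K) = x + σ := by
    rw [RingOfIntegers.coe_eq_algebraMap, map_add, map_intCast]
  have hnormℤ := Algebra.coe_norm_int ((x : 𝓞 K) + σ)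
  rw [hcoe, hnormℚ] at hnormℤ
  exact_mod_cast hnormℤ

theorem Ideal.absNorm_span_natCast_pair_dvd {S : Type*} [CommRing S] [IsDedekindDomain S]
    [Module.Free ℤ S] [Module.Finite ℤ S] (hS : finrank ℤ S = 2) {a b : ℕ} (hab : a.Coprime b)
    {β : S} (hβ : (Algebra.norm ℤ β).natAbs = a * b) :
    absNorm (span {(a : S), β}) ∣ a := by
  have h := absNorm_span_insert (a : S) {β}
  rwa [absNorm_span_singleton, hβ, Algebra.norm_natCast, hS, Int.natAbs_pow, Int.natAbs_natCast,
    gcd_eq_nat_gcd, Nat.gcd_comm, sq, Nat.gcd_mul_left, hab.gcd_eq_one, mul_one] at h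

theorem norm_of_explicit_ideal_divides_general
    (n : ℤ) (hsf : Squarefree n) (hn : n ≠ 1)
    (K : Type*) [Field K] [NumberField K] (hK : finrank ℚ K = 2)
    (σ : 𝓞 K) (hσ : σ ^ 2 = (n : 𝓞 K))
    (a₁ a₂ : ℕ) (hcop : Nat.Coprime a₁ a₂)
    (x : ℤ) (hx : (a₁ : ℤ) * a₂ + n = x ^ 2) :
    Ideal.absNorm (Ideal.span {(a₁ : 𝓞 K), (x : 𝓞 K) + σ}) ∣ a₁ ∧
    Ideal.absNorm (Ideal.span {(a₂ : 𝓞 K), (x : 𝓞 K) + σ}) ∣ a₂ := by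
  have hrank : finrank ℤ (𝓞 K) = 2 := (RingOfIntegers.rank K).trans hK
  have hnorm : (Algebra.norm ℤ ((x : 𝓞 K) + σ)).natAbs = a₁ * a₂ := by
    rw [RingOfIntegers.norm_intCast_add_of_sq_eq hK (Int.not_isSquare_of_squarefree hsf hn) hσ x,
      ← hx, add_sub_cancel_right]
    exact_mod_cast Int.natAbs_natCast (a₁ * a₂)
  exact ⟨Ideal.absNorm_span_natCast_pair_dvd hrank hcop hnorm,
    Ideal.absNorm_span_natCast_pair_dvd hrank hcop.symm (mul_comm a₁ a₂ ▸ hnorm)⟩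

/-- Let `n` be a squarefree integer, `n ≠ 1`, and let `a₁, a₂` be coprime
positive integers with `a₁a₂ + n = x²` for some integer `x`.  Then for `i = 1, 2` the norm
of the ideal `⟨aᵢ, x + √n⟩` of the ring of integers of `ℚ(√n)` divides `aᵢ`. -/
theorem norm_of_explicit_ideal_divides
    (n : ℤ) (hsf : Squarefree n) (hn : n ≠ 1)
    (K : Type*) [Field K] [NumberField K] (hK : finrank ℚ K = 2)
    (σ : 𝓞 K) (hσ : σ ^ 2 = (n : 𝓞 K))
    (a₁ a₂ : ℕ) (ha₁ : 0 < a₁) (ha₂ : 0 < a₂) (hcop : Nat.Coprime a₁ a₂)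
    (x : ℤ) (hx : (a₁ : ℤ) * a₂ + n = x ^ 2) :
    Ideal.absNorm (Ideal.span {(a₁ : 𝓞 K), (x : 𝓞 K) + σ}) ∣ a₁ ∧
    Ideal.absNorm (Ideal.span {(a₂ : 𝓞 K), (x : 𝓞 K) + σ}) ∣ a₂ :=
  norm_of_explicit_ideal_divides_general n hsf hn K hK σ hσ a₁ a₂ hcop x hx
end
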